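/- Let A, B be SPD, λ₁ the smallest eigenvalue of A with eigenvector u*, x* = B^{1/2}u*/‖B^{1/2}u*‖, and let φ ∈ (0,π/2] be defined by sin φ = ‖u*‖²/(‖u*‖_B‖u*‖_{B⁻¹}). For any unit vector x with θ := arccos(xᵀx*) < φ, the function f(x) = −(xᵀB⁻¹x)/(xᵀB^{-1/2}AB^{-1/2}x) satisfies ⟨∇f(x), −log_x(x*)⟩ ≥ 2a(x)(f(x) − f(x*)) with a(x) = λ₁‖u*‖²_{B⁻¹}(cos θ − cos φ)/(‖A^{1/2}B^{-1/2}x‖²‖u*‖²), where log_x(x*) = (θ/sin θ)(I − xxᵀ)x* and f(x*) = −1/λ₁. -/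

import Mathlib

/-!
Whitening with `R = B^{-1/2}` turns `f` into the quotient `-(w ⬝ᵥ w) / (w ⬝ᵥ A *ᵥ w)` of `w = R x`,
which is at least `-1/λ₁` and attains it at `x*`. Being homogeneous of degree `0`, `f` has gradient
orthogonal to `x`, so only the `x*`-component of `log_x(x*)` counts, and since
`B⁻¹ x* = v / ‖S u*‖` with `v = R u*`, that component is proportional to
`(θ / sin θ) (f - f*) (v ⬝ᵥ x)`. Now `v` makes the angle `π/2 - φ` with `x*`, so the triangle
inequality for angles gives `v ⬝ᵥ x ≥ ‖v‖ sin (φ - θ)`, and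
`cos θ - cos φ ≤ sin φ sin (φ - θ)` together with `sin θ ≤ θ` finishes the estimate.
-/

open Matrix

section DotProduct

variable {ι : Type*} [Fintype ι]

lemma dotProduct_self_nonneg (v : ι → ℝ) : 0 ≤ v ⬝ᵥ v := by
  simpa using dotProduct_star_self_nonneg v

lemma dotProduct_self_pos {v : ι → ℝ} (hv : v ≠ 0) : 0 < v ⬝ᵥ v := by
  simpa using dotProduct_star_self_pos_iff.mpr hv

lemma sq_dotProduct_le (v w : ι → ℝ) : (v ⬝ᵥ w) ^ 2 ≤ (v ⬝ᵥ v) * (w ⬝ᵥ w) := by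
  simpa [dotProduct, sq] using Finset.sum_mul_sq_le_sq_mul_sq Finset.univ v w

lemma dotProduct_div_sqrt_mul_sqrt_mem_Icc (v w : ι → ℝ) :
    v ⬝ᵥ w / (√(v ⬝ᵥ v) * √(w ⬝ᵥ w)) ∈ Set.Icc (-1) 1 := by
  rw [Set.mem_Icc, ← abs_le, abs_div,
    abs_of_nonneg (mul_nonneg (Real.sqrt_nonneg (v ⬝ᵥ v)) (Real.sqrt_nonneg (w ⬝ᵥ w)))]
  refine div_le_one_of_le₀ ?_ (by positivity)
  rw [← Real.sqrt_mul (dotProduct_self_nonneg v)]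
  exact Real.abs_le_sqrt (sq_dotProduct_le v w)

lemma neg_one_le_dotProduct_le_one {x y : ι → ℝ} (hx : x ⬝ᵥ x = 1) (hy : y ⬝ᵥ y = 1) :
    -1 ≤ x ⬝ᵥ y ∧ x ⬝ᵥ y ≤ 1 :=
  abs_le_of_sq_le_sq' (by simpa [hx, hy] using sq_dotProduct_le x y) zero_le_one

lemma eq_of_dotProduct_eq_one {x y : ι → ℝ} (hx : x ⬝ᵥ x = 1) (hy : y ⬝ᵥ y = 1)
    (hxy : x ⬝ᵥ y = 1) : x = y := by
  refine sub_eq_zero.mp (dotProduct_self_eq_zero.mp ?_)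
  rw [sub_dotProduct, dotProduct_sub, dotProduct_sub, dotProduct_comm y x, hx, hy, hxy]
  norm_num

lemma dotProduct_self_inv_sqrt_smul {v : ι → ℝ} (hv : v ≠ 0) :
    (√(v ⬝ᵥ v))⁻¹ • v ⬝ᵥ (√(v ⬝ᵥ v))⁻¹ • v = 1 := by
  have h := dotProduct_self_pos hv
  rw [smul_dotProduct, dotProduct_smul, smul_eq_mul, smul_eq_mul, ← mul_assoc, ← mul_inv,
    Real.mul_self_sqrt h.le, inv_mul_cancel₀ h.ne']

lemma Matrix.IsHermitian.dotProduct_mulVec_comm {M : Matrix ι ι ℝ} (hM : M.IsHermitian)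
    (v w : ι → ℝ) : v ⬝ᵥ M *ᵥ w = M *ᵥ v ⬝ᵥ w := by
  rw [dotProduct_mulVec, ← mulVec_transpose, ← conjTranspose_eq_transpose_of_trivial, hM]

lemma Matrix.IsHermitian.dotProduct_mul_self_mulVec {M : Matrix ι ι ℝ} (hM : M.IsHermitian)
    (y : ι → ℝ) : y ⬝ᵥ (M * M) *ᵥ y = M *ᵥ y ⬝ᵥ M *ᵥ y := by
  rw [← mulVec_mulVec, hM.dotProduct_mulVec_comm]

lemma Matrix.IsHermitian.dotProduct_mul_mul_mulVec {M : Matrix ι ι ℝ} (hM : M.IsHermitian)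
    (N : Matrix ι ι ℝ) (y : ι → ℝ) : y ⬝ᵥ (M * N * M) *ᵥ y = M *ᵥ y ⬝ᵥ N *ᵥ (M *ᵥ y) := by
  rw [← mulVec_mulVec, ← mulVec_mulVec, hM.dotProduct_mulVec_comm]

/-- Triangle inequality `∠(v, x) ≤ ∠(v, y) + ∠(y, x)` for angles, in cosine form, where `y` makes
the angle `π / 2 - φ` with `v` and the angle `θ` with `x`. -/
lemma le_dotProduct_of_angles {v x y : ι → ℝ} {θ φ : ℝ} (hx : x ⬝ᵥ x = 1) (hy : y ⬝ᵥ y = 1)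
    (hxy : x ⬝ᵥ y = Real.cos θ) (hθ : 0 ≤ Real.sin θ)
    (hvy : v ⬝ᵥ y = √(v ⬝ᵥ v) * Real.sin φ) (hφ : 0 ≤ Real.cos φ) :
    √(v ⬝ᵥ v) * Real.sin (φ - θ) ≤ v ⬝ᵥ x := by
  set r := v - (v ⬝ᵥ y) • y
  set z := x - (x ⬝ᵥ y) • y
  have hvv : v ⬝ᵥ v = √(v ⬝ᵥ v) ^ 2 := (Real.sq_sqrt (dotProduct_self_nonneg v)).symm
  have hrr : r ⬝ᵥ r = (√(v ⬝ᵥ v) * Real.cos φ) ^ 2 := by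
    simp only [r, sub_dotProduct, dotProduct_sub, smul_dotProduct, dotProduct_smul, smul_eq_mul,
      dotProduct_comm y v, hy, hvy]
    nth_rw 1 [hvv]
    linear_combination -(√(v ⬝ᵥ v)) ^ 2 * Real.sin_sq_add_cos_sq φ
  have hzz : z ⬝ᵥ z = Real.sin θ ^ 2 := by
    simp only [z, sub_dotProduct, dotProduct_sub, smul_dotProduct, dotProduct_smul, smul_eq_mul,
      dotProduct_comm y x, hy, hx, hxy]
    linear_combination -Real.sin_sq_add_cos_sq θ
  have hrz : -(√(v ⬝ᵥ v) * Real.cos φ * Real.sin θ) ≤ r ⬝ᵥ z := by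
    refine (abs_le_of_sq_le_sq' ?_ (by positivity)).1
    simpa [hrr, hzz, mul_pow] using sq_dotProduct_le r z
  have hvx : v ⬝ᵥ x = r ⬝ᵥ z + (v ⬝ᵥ y) * (x ⬝ᵥ y) := by
    simp only [r, z, sub_dotProduct, dotProduct_sub, smul_dotProduct, dotProduct_smul, smul_eq_mul,
      dotProduct_comm y x, hy]
    ring
  rw [hvx, hvy, hxy, Real.sin_sub]
  linarith

end DotProduct

lemma Real.cos_sub_cos_mul_sin_le {θ φ : ℝ} (hθ : 0 ≤ θ) (hθφ : θ ≤ φ) (hφ : φ ≤ Real.pi / 2) :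
    (Real.cos θ - Real.cos φ) * Real.sin θ ≤ θ * (Real.sin φ * Real.sin (φ - θ)) := by
  have hcosφ : 0 ≤ Real.cos φ :=
    Real.cos_nonneg_of_neg_pi_div_two_le_of_le (by linarith [Real.pi_pos]) hφ
  have hsinθ : 0 ≤ Real.sin θ := Real.sin_nonneg_of_nonneg_of_le_pi hθ (by linarith [Real.pi_pos])
  have hK : 0 ≤ Real.sin φ * Real.sin (φ - θ) :=
    mul_nonneg (Real.sin_nonneg_of_nonneg_of_le_pi (by linarith) (by linarith [Real.pi_pos]))
      (Real.sin_nonneg_of_nonneg_of_le_pi (by linarith) (by linarith [Real.pi_pos]))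
  have hcos : Real.cos θ - Real.cos φ ≤ Real.sin φ * Real.sin (φ - θ) := by
    have h := Real.cos_sub φ (φ - θ)
    rw [sub_sub_cancel] at h
    nlinarith [Real.cos_le_one (φ - θ)]
  calc (Real.cos θ - Real.cos φ) * Real.sin θ ≤ Real.sin φ * Real.sin (φ - θ) * Real.sin θ :=
        mul_le_mul_of_nonneg_right hcos hsinθ
    _ ≤ Real.sin φ * Real.sin (φ - θ) * θ := mul_le_mul_of_nonneg_left (Real.sin_le hθ) hK
    _ = θ * (Real.sin φ * Real.sin (φ - θ)) := mul_comm _ _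

lemma sqrt_dotProduct_mul_cos_sub_cos_div_sin_le {ι : Type*} [Fintype ι] {v x y : ι → ℝ}
    {θ φ : ℝ} (hx : x ⬝ᵥ x = 1) (hy : y ⬝ᵥ y = 1) (hxy : x ⬝ᵥ y = Real.cos θ)
    (hvy : v ⬝ᵥ y = √(v ⬝ᵥ v) * Real.sin φ) (hθ : 0 < θ) (hθφ : θ ≤ φ) (hφ : φ ≤ Real.pi / 2) :
    √(v ⬝ᵥ v) * (Real.cos θ - Real.cos φ) / Real.sin φ ≤ θ * (v ⬝ᵥ x) / Real.sin θ := by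
  have hsinθ : 0 < Real.sin θ := Real.sin_pos_of_pos_of_lt_pi hθ (by linarith [Real.pi_pos])
  have hsinφ : 0 < Real.sin φ :=
    Real.sin_pos_of_pos_of_lt_pi (hθ.trans_le hθφ) (by linarith [Real.pi_pos])
  have hcosφ : 0 ≤ Real.cos φ :=
    Real.cos_nonneg_of_neg_pi_div_two_le_of_le (by linarith [Real.pi_pos]) hφ
  have hangle := le_dotProduct_of_angles hx hy hxy hsinθ.le hvy hcosφ
  have htrig := Real.cos_sub_cos_mul_sin_le hθ.le hθφ hφ
  rw [div_le_div_iff₀ hsinφ hsinθ]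
  nlinarith [mul_le_mul_of_nonneg_left hangle hθ.le, Real.sqrt_nonneg (v ⬝ᵥ v)]

section RayleighQuotient

variable {ι : Type*} [Fintype ι] {P Q : Matrix ι ι ℝ}

lemma neg_one_div_le_neg_div_of_forall_le {A : Matrix ι ι ℝ} {μ : ℝ} (hμ : 0 < μ)
    (hA : ∀ y, μ * (y ⬝ᵥ y) ≤ y ⬝ᵥ A *ᵥ y) {w : ι → ℝ} (hw : w ≠ 0) :
    -1 / μ ≤ -(w ⬝ᵥ w) / (w ⬝ᵥ A *ᵥ w) := by
  have hww := dotProduct_self_pos hw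
  rw [div_le_div_iff₀ hμ ((mul_pos hμ hww).trans_le (hA w))]
  linarith [hA w]

lemma neg_div_eq_of_mulVec_eq_smul {y : ι → ℝ} {μ : ℝ} (hy : Q *ᵥ y = μ • P *ᵥ y)
    (hQy : y ⬝ᵥ Q *ᵥ y ≠ 0) : -(y ⬝ᵥ P *ᵥ y) / (y ⬝ᵥ Q *ᵥ y) = -1 / μ := by
  rw [hy, dotProduct_smul, smul_eq_mul] at hQy ⊢
  rw [neg_div, neg_div, div_mul_cancel_right₀ (right_ne_zero_of_mul hQy), one_div]

/-- `P *ᵥ x + f • Q *ᵥ x` is a multiple of the gradient of `x ↦ -(x ⬝ᵥ P *ᵥ x) / (x ⬝ᵥ Q *ᵥ x)`,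
which is orthogonal to `x` because the quotient is homogeneous of degree `0`. -/
lemma add_smul_mulVec_dotProduct_sub_smul (hP : P.IsHermitian) (hQ : Q.IsHermitian)
    {x y : ι → ℝ} {f μ : ℝ} (hy : Q *ᵥ y = μ • P *ᵥ y) (hQx : x ⬝ᵥ Q *ᵥ x ≠ 0)
    (hf : f = -(x ⬝ᵥ P *ᵥ x) / (x ⬝ᵥ Q *ᵥ x)) (c : ℝ) :
    (P *ᵥ x + f • Q *ᵥ x) ⬝ᵥ (y - c • x) = (1 + f * μ) * (x ⬝ᵥ P *ᵥ y) := by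
  have hx : (P *ᵥ x + f • Q *ᵥ x) ⬝ᵥ x = 0 := by
    rw [add_dotProduct, smul_dotProduct, dotProduct_comm, dotProduct_comm (Q *ᵥ x), smul_eq_mul,
      hf, div_mul_cancel₀ _ hQx, add_neg_cancel]
  rw [dotProduct_sub, dotProduct_smul, hx, smul_zero, sub_zero, add_dotProduct, smul_dotProduct,
    ← hP.dotProduct_mulVec_comm, ← hQ.dotProduct_mulVec_comm, hy, dotProduct_smul, smul_eq_mul,
    smul_eq_mul]
  ring

end RayleighQuotient

lemma le_grad_dotProduct_neg_log {ι : Type*} [Fintype ι] {P Q : Matrix ι ι ℝ}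
    (hP : P.IsHermitian) (hQ : Q.IsHermitian) {x y v : ι → ℝ} {μ c θ φ f : ℝ}
    (hx : x ⬝ᵥ x = 1) (hy : y ⬝ᵥ y = 1) (hxy : x ⬝ᵥ y = Real.cos θ)
    (hvy : v ⬝ᵥ y = √(v ⬝ᵥ v) * Real.sin φ) (hθ : 0 < θ) (hθφ : θ ≤ φ) (hφ : φ ≤ Real.pi / 2)
    (hQy : Q *ᵥ y = μ • P *ᵥ y) (hPy : P *ᵥ y = c • v) (hc : 0 ≤ c)
    (hQx : 0 < x ⬝ᵥ Q *ᵥ x) (hf : f = -(x ⬝ᵥ P *ᵥ x) / (x ⬝ᵥ Q *ᵥ x)) (hμf : 0 ≤ 1 + f * μ) :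
    2 * (√(v ⬝ᵥ v) * (Real.cos θ - Real.cos φ) / Real.sin φ) * c * (1 + f * μ) / (x ⬝ᵥ Q *ᵥ x) ≤
      ((-2 / (x ⬝ᵥ Q *ᵥ x)) • (P *ᵥ x + f • Q *ᵥ x)) ⬝ᵥ
        -((θ / Real.sin θ) • (y - (x ⬝ᵥ y) • x)) := by
  have hgrad := add_smul_mulVec_dotProduct_sub_smul hP hQ hQy hQx.ne' hf (x ⬝ᵥ y)
  rw [hPy, dotProduct_smul, smul_eq_mul, dotProduct_comm x v] at hgrad
  rw [dotProduct_neg, dotProduct_smul, smul_dotProduct, hgrad, smul_eq_mul, smul_eq_mul]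
  have hkey := sqrt_dotProduct_mul_cos_sub_cos_div_sin_le hx hy hxy hvy hθ hθφ hφ
  calc 2 * (√(v ⬝ᵥ v) * (Real.cos θ - Real.cos φ) / Real.sin φ) * c * (1 + f * μ) / (x ⬝ᵥ Q *ᵥ x)
      ≤ 2 * (θ * (v ⬝ᵥ x) / Real.sin θ) * c * (1 + f * μ) / (x ⬝ᵥ Q *ᵥ x) := by gcongr
    _ = _ := by ring

section Whitening

variable {ι : Type*} [Fintype ι] [DecidableEq ι] {S R : Matrix ι ι ℝ}

lemma Matrix.PosDef.mul_eq_one_of_mul_self_eq_inv (hS : S.PosDef) (hR : R.PosDef)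
    (h : R * R = (S * S)⁻¹) : R * S = 1 := by
  have hRS : R = S⁻¹ := by
    open scoped MatrixOrder in
    refine (CFC.sq_eq_sq_iff R S⁻¹ hR.posSemidef.nonneg hS.inv.posSemidef.nonneg).mp ?_
    rw [sq, sq, h, mul_inv_rev]
  rw [hRS, nonsing_inv_mul _ hS.det_pos.ne'.isUnit]

lemma Matrix.mulVec_ne_zero_of_mul_eq_one (h : R * S = 1) {u : ι → ℝ} (hu : u ≠ 0) :
    S *ᵥ u ≠ 0 := by
  intro hS
  rw [← one_mulVec u, ← h, ← mulVec_mulVec, hS, mulVec_zero] at hu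
  exact hu rfl

lemma Matrix.mul_self_mulVec_smul_mulVec (h : R * S = 1) (c : ℝ) (u : ι → ℝ) :
    (R * R) *ᵥ (c • S *ᵥ u) = c • R *ᵥ u := by
  rw [mulVec_smul, mulVec_mulVec, mul_assoc, h, mul_one]

lemma Matrix.mul_mul_mulVec_smul_mulVec (h : R * S = 1) {A : Matrix ι ι ℝ} {u : ι → ℝ} {μ : ℝ}
    (hAu : A *ᵥ u = μ • u) (c : ℝ) :
    (R * A * R) *ᵥ (c • S *ᵥ u) = μ • (R * R) *ᵥ (c • S *ᵥ u) := by
  rw [mul_self_mulVec_smul_mulVec h, mulVec_smul, mulVec_mulVec, mul_assoc, h, mul_one,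
    ← mulVec_mulVec, hAu, mulVec_smul, smul_comm]

end Whitening

theorem stmt_13_general {n : ℕ} (A B S R : Matrix (Fin n) (Fin n) ℝ)
    (hA : A.PosDef)
    (hS : S.PosDef) (hSB : S * S = B)
    (hR : R.PosDef) (hRB : R * R = B⁻¹)
    (lam₁ : ℝ) (hlam₁ : 0 < lam₁)
    (hmin : ∀ y : Fin n → ℝ, lam₁ * (y ⬝ᵥ y) ≤ y ⬝ᵥ A.mulVec y)
    (u : Fin n → ℝ) (hu : u ≠ 0) (hAu : A.mulVec u = lam₁ • u)
    (xstar : Fin n → ℝ)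
    (hxstar : xstar = (Real.sqrt (u ⬝ᵥ B.mulVec u))⁻¹ • S.mulVec u)
    (φ : ℝ)
    (hφ : φ = Real.arcsin
      ((u ⬝ᵥ u) / (Real.sqrt (u ⬝ᵥ B.mulVec u) * Real.sqrt (u ⬝ᵥ B⁻¹.mulVec u))))
    (x : Fin n → ℝ) (hx : x ⬝ᵥ x = 1)
    (θ : ℝ) (hθ : θ = Real.arccos (x ⬝ᵥ xstar)) (hθφ : θ < φ)
    (logx : Fin n → ℝ)
    (hlog : logx = if θ = 0 then 0 else (θ / Real.sin θ) • (xstar - (x ⬝ᵥ xstar) • x))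
    (f fstar : ℝ)
    (hf : f = -(x ⬝ᵥ B⁻¹.mulVec x) / (x ⬝ᵥ (R * A * R).mulVec x))
    (hfstar : fstar = -1 / lam₁)
    (g : Fin n → ℝ)
    (hg : g = (-2 / (x ⬝ᵥ (R * A * R).mulVec x)) •
      (B⁻¹.mulVec x + f • (R * A * R).mulVec x))
    (a : ℝ)
    (ha : a = lam₁ * (u ⬝ᵥ B⁻¹.mulVec u) * (Real.cos θ - Real.cos φ) /
      ((x ⬝ᵥ (R * A * R).mulVec x) * (u ⬝ᵥ u))) :
    g ⬝ᵥ (-logx) ≥ 2 * a * (f - fstar) := by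
  subst hSB
  have hRS : R * S = 1 := hS.mul_eq_one_of_mul_self_eq_inv hR hRB
  have hSR : S * R = 1 := mul_eq_one_comm.mp hRS
  rw [← hRB] at hφ hf hg ha
  rw [hS.1.dotProduct_mul_self_mulVec] at hxstar hφ
  rw [hR.1.dotProduct_mul_self_mulVec] at hφ ha
  set v := R *ᵥ u
  set nB := √(S *ᵥ u ⬝ᵥ S *ᵥ u)
  have hSu : S *ᵥ u ≠ 0 := mulVec_ne_zero_of_mul_eq_one hRS hu
  have hnB : 0 < nB := Real.sqrt_pos.mpr (dotProduct_self_pos hSu)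
  have hv : 0 < √(v ⬝ᵥ v) :=
    Real.sqrt_pos.mpr (dotProduct_self_pos (mulVec_ne_zero_of_mul_eq_one hSR hu))
  have huu : S *ᵥ u ⬝ᵥ v = u ⬝ᵥ u := by
    rw [← hS.1.dotProduct_mulVec_comm, mulVec_mulVec, hSR, one_mulVec]
  have hsinφ : Real.sin φ = u ⬝ᵥ u / (nB * √(v ⬝ᵥ v)) :=
    hφ ▸ Real.sin_arcsin' (huu ▸ dotProduct_div_sqrt_mul_sqrt_mem_Icc (S *ᵥ u) v)
  have hxs1 : xstar ⬝ᵥ xstar = 1 := hxstar ▸ dotProduct_self_inv_sqrt_smul hSu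
  have hvxs : v ⬝ᵥ xstar = √(v ⬝ᵥ v) * Real.sin φ := by
    rw [hsinφ, hxstar, dotProduct_smul, dotProduct_comm, huu, smul_eq_mul]
    field_simp
  have hQxs : (R * A * R) *ᵥ xstar = lam₁ • (R * R) *ᵥ xstar :=
    hxstar ▸ mul_mul_mulVec_smul_mulVec hRS hAu _
  have hcosθ : Real.cos θ = x ⬝ᵥ xstar :=
    hθ ▸ Real.cos_arccos (neg_one_le_dotProduct_le_one hx hxs1).1
      (neg_one_le_dotProduct_le_one hx hxs1).2
  have hw : R *ᵥ x ≠ 0 := mulVec_ne_zero_of_mul_eq_one hSR (by rintro rfl; simp at hx)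
  have hq : 0 < x ⬝ᵥ (R * A * R) *ᵥ x := by
    rw [hR.1.dotProduct_mul_mul_mulVec]
    exact (mul_pos hlam₁ (dotProduct_self_pos hw)).trans_le (hmin _)
  rcases (hθ ▸ Real.arccos_nonneg _ : 0 ≤ θ).eq_or_lt with hθ0 | hθpos
  · have hxx : x = xstar := eq_of_dotProduct_eq_one hx hxs1 (by rw [← hcosθ, ← hθ0, Real.cos_zero])
    subst hxx
    have hfeq : f = fstar := hf.trans (hfstar ▸ neg_div_eq_of_mulVec_eq_smul hQxs hq.ne')
    simp [hlog, ← hθ0, hfeq]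
  · have hP : (R * R).IsHermitian := by
      simpa only [hR.1.star_eq] using (IsSelfAdjoint.star_mul_self R).isHermitian
    have hQ : (R * A * R).IsHermitian := (IsSelfAdjoint.conjugate_self hA.1 hR.1).isHermitian
    have hPxs : (R * R) *ᵥ xstar = nB⁻¹ • v := hxstar ▸ mul_self_mulVec_smul_mulVec hRS _ _
    have hfl : 0 ≤ 1 + f * lam₁ := by
      have h := neg_one_div_le_neg_div_of_forall_le hlam₁ hmin hw
      rw [← hR.1.dotProduct_mul_self_mulVec, ← hR.1.dotProduct_mul_mul_mulVec, ← hf,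
        div_le_iff₀ hlam₁] at h
      linarith
    have hbound := le_grad_dotProduct_neg_log hP hQ hx hxs1 hcosθ.symm hvxs hθpos hθφ.le
      (hφ ▸ Real.arcsin_le_pi_div_two _) hQxs hPxs (inv_nonneg.mpr hnB.le) hq hf hfl
    rw [hlog, if_neg hθpos.ne', hg, ge_iff_le]
    convert hbound using 1
    rw [← Real.sq_sqrt (dotProduct_self_nonneg v)] at ha
    rw [ha, hfstar, hsinφ]
    field_simp
    ring

theorem stmt_13 {n : ℕ} (A B S R : Matrix (Fin n) (Fin n) ℝ)
    (hA : A.PosDef) (hB : B.PosDef)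
    (hS : S.PosDef) (hSB : S * S = B)
    (hR : R.PosDef) (hRB : R * R = B⁻¹)
    (lam₁ : ℝ) (hlam₁ : 0 < lam₁)
    (hmin : ∀ y : Fin n → ℝ, lam₁ * (y ⬝ᵥ y) ≤ y ⬝ᵥ A.mulVec y)
    (u : Fin n → ℝ) (hu : u ≠ 0) (hAu : A.mulVec u = lam₁ • u)
    (xstar : Fin n → ℝ)
    (hxstar : xstar = (Real.sqrt (u ⬝ᵥ B.mulVec u))⁻¹ • S.mulVec u)
    (φ : ℝ)
    (hφ : φ = Real.arcsin
      ((u ⬝ᵥ u) / (Real.sqrt (u ⬝ᵥ B.mulVec u) * Real.sqrt (u ⬝ᵥ B⁻¹.mulVec u))))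
    (x : Fin n → ℝ) (hx : x ⬝ᵥ x = 1)
    (θ : ℝ) (hθ : θ = Real.arccos (x ⬝ᵥ xstar)) (hθφ : θ < φ)
    (logx : Fin n → ℝ)
    (hlog : logx = if θ = 0 then 0 else (θ / Real.sin θ) • (xstar - (x ⬝ᵥ xstar) • x))
    (f fstar : ℝ)
    (hf : f = -(x ⬝ᵥ B⁻¹.mulVec x) / (x ⬝ᵥ (R * A * R).mulVec x))
    (hfstar : fstar = -1 / lam₁)
    (g : Fin n → ℝ)
    (hg : g = (-2 / (x ⬝ᵥ (R * A * R).mulVec x)) •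
      (B⁻¹.mulVec x + f • (R * A * R).mulVec x))
    (a : ℝ)
    (ha : a = lam₁ * (u ⬝ᵥ B⁻¹.mulVec u) * (Real.cos θ - Real.cos φ) /
      ((x ⬝ᵥ (R * A * R).mulVec x) * (u ⬝ᵥ u))) :
    g ⬝ᵥ (-logx) ≥ 2 * a * (f - fstar) :=
  stmt_13_general A B S R hA hS hSB hR hRB lam₁ hlam₁ hmin u hu hAu xstar hxstar φ hφ x hx θ hθ hθφ
    logx hlog f fstar hf hfstar g hg a ha
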